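/- arXiv:1511.04039 — 2 statements merged into one kernel-verified Lean document; each statement's English description precedes it below -/
import Mathlib

section
/- Linear recurrence: if (t_n) is the generalized Gončarov basis for (𝔡, Z) and (p_n) the basic sequence of 𝔡, then p_n(x) = Σ_{i=0}^n C(n,i) p_{n−i}(z_i) t_i(x) for all n; equivalently t_n(x) = p_n(x) − Σ_{i=0}^{n−1} C(n,i) p_{n−i}(z_i) t_i(x). -/
open Polynomial

/-- The shift operator `E_a : K[x] → K[x]`, `f(x) ↦ f(x+a)`, as a linear endomorphism. -/
noncomputable def shiftOp (K : Type*) [Field K] (a : K) : Module.End K (Polynomial K) :=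
  (aeval (X + C a) : Polynomial K →ₐ[K] Polynomial K).toLinearMap

/-- A linear operator on `K[x]` is shift-invariant if it commutes with every shift `E_a`. -/
def IsShiftInvariant {K : Type*} [Field K] (s : Module.End K (Polynomial K)) : Prop :=
  ∀ a : K, s ∘ₗ shiftOp K a = shiftOp K a ∘ₗ s

/-- A delta operator: shift-invariant and sends `X` to a nonzero constant. -/
def IsDeltaOperator {K : Type*} [Field K] (d : Module.End K (Polynomial K)) : Prop :=
  IsShiftInvariant d ∧ ∃ c : K, c ≠ 0 ∧ d X = C c

/-- The sequence of basic polynomials of a delta operator `d`. -/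
def IsBasicSequence {K : Type*} [Field K] (d : Module.End K (Polynomial K))
    (p : ℕ → Polynomial K) : Prop :=
  p 0 = 1 ∧ (∀ n, 1 ≤ n → (p n).eval 0 = 0) ∧
    ∀ n, 1 ≤ n → d (p n) = (n : K) • p (n - 1)

/-- The generalized Gončarov basis associated with the pair `(d, z)`:
`deg t_n = n` and `ε_{z_i}(d^i t_n) = n! δ_{i,n}`. -/
def IsGoncarovBasis {K : Type*} [Field K] (d : Module.End K (Polynomial K))
    (z : ℕ → K) (t : ℕ → Polynomial K) : Prop :=
  ∀ n, (t n).natDegree = n ∧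
    ∀ i, ((d ^ i) (t n)).eval (z i) = if i = n then (n.factorial : K) else 0

/-! Shift invariance makes a delta operator `d` a series `∑ₖ (d Xᵏ)(0) D⁽ᵏ⁾` in the Hasse
derivatives whose constant term vanishes, so `d` lowers degrees and `dᴺ` kills every polynomial
of degree `< N`. Peeling off leading terms then shows that every `f` has coordinates
`ε_{zᵢ}(dⁱ f) / i!` in the Gončarov basis. For `f = pₙ` we have
`dⁱ pₙ = n (n - 1) ⋯ (n - i + 1) pₙ₋ᵢ`, which vanishes for `i > n`, so these coordinates are
`binom(n, i) pₙ₋ᵢ(zᵢ)`. -/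

section

variable {K : Type*} [Field K]

lemma shiftOp_apply (a : K) (f : K[X]) : shiftOp K a f = taylor a f := by
  simp [shiftOp, taylor_apply, aeval_def, comp, algebraMap_eq]

namespace IsShiftInvariant

variable {s : Module.End K K[X]}

lemma taylor_apply (hs : IsShiftInvariant s) (r : K) (f : K[X]) :
    taylor r (s f) = s (taylor r f) := by
  simpa [shiftOp_apply] using (LinearMap.congr_fun (hs r) f).symm

lemma eval_apply (hs : IsShiftInvariant s) (r : K) (f : K[X]) :
    (s f).eval r = (s (taylor r f)).eval 0 := by
  rw [← hs.taylor_apply, taylor_eval, zero_add]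

lemma eq_sum_hasseDeriv [Infinite K] (hs : IsShiftInvariant s) (f : K[X]) :
    s f = ∑ k ∈ Finset.range (f.natDegree + 1), (s (X ^ k)).eval 0 • hasseDeriv k f := by
  refine Polynomial.funext fun r => ?_
  have hdeg : (taylor r f).natDegree < f.natDegree + 1 := by
    rw [natDegree_taylor]; omega
  rw [hs.eval_apply, as_sum_range' _ _ hdeg, map_sum, eval_finsetSum, eval_finsetSum]
  refine Finset.sum_congr rfl fun k _ => ?_
  rw [← smul_X_eq_monomial, map_smul, eval_smul, eval_smul, taylor_coeff, smul_eq_mul,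
    smul_eq_mul, mul_comm]

end IsShiftInvariant

namespace IsDeltaOperator

variable {d : Module.End K K[X]}

lemma apply_C (hd : IsDeltaOperator d) (a : K) : d (C a) = 0 := by
  obtain ⟨hs, c, -, hdX⟩ := hd
  have h := hs.taylor_apply a X
  rw [hdX, taylor_C, taylor_X, map_add, hdX] at h
  simpa using h

lemma apply_one (hd : IsDeltaOperator d) : d 1 = 0 := by
  simpa using hd.apply_C 1

lemma degree_apply_lt [Infinite K] (hd : IsDeltaOperator d) {n : ℕ} {f : K[X]}
    (hf : f.degree < ↑(n + 1)) : (d f).degree < n := by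
  rw [← mem_degreeLT, hd.1.eq_sum_hasseDeriv]
  refine Submodule.sum_mem _ fun k _ => ?_
  rcases Nat.eq_zero_or_pos k with rfl | hk
  · simp [hd.apply_one]
  refine Submodule.smul_mem _ _ (mem_degreeLT.2 ((degree_lt_iff_coeff_zero _ _).2 fun m hm => ?_))
  rw [hasseDeriv_coeff, (degree_lt_iff_coeff_zero _ _).1 hf _ (by omega), mul_zero]

lemma pow_apply_eq_zero [Infinite K] (hd : IsDeltaOperator d) {m : ℕ} {f : K[X]}
    (hf : f.degree < m) : (d ^ m) f = 0 := by
  induction m generalizing f with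
  | zero => simp [degree_eq_bot.1 (by simpa using hf)]
  | succ m ih => rw [pow_succ, Module.End.mul_apply, ih (hd.degree_apply_lt hf)]

end IsDeltaOperator

namespace IsBasicSequence

variable {d : Module.End K K[X]} {p : ℕ → K[X]}

lemma pow_apply (hd : IsDeltaOperator d) (hp : IsBasicSequence d p) (n i : ℕ) :
    (d ^ i) (p n) = (n.descFactorial i : K) • p (n - i) := by
  induction i with
  | zero => simp
  | succ i ih =>
    rw [pow_succ', Module.End.mul_apply, ih, map_smul]
    rcases lt_or_ge i n with hi | hi
    · rw [hp.2.2 (n - i) (by omega), smul_smul, Nat.descFactorial_succ, Nat.cast_mul,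
        mul_comm, Nat.cast_sub hi.le, Nat.sub_sub]
    · rw [Nat.sub_eq_zero_of_le hi, hp.1, hd.apply_one, smul_zero,
        Nat.descFactorial_eq_zero_iff_lt.2 (by omega), Nat.cast_zero, zero_smul]

lemma eval_pow_apply_div_factorial [CharZero K] (hd : IsDeltaOperator d)
    (hp : IsBasicSequence d p) (n i : ℕ) (x : K) :
    ((d ^ i) (p n)).eval x / i.factorial = n.choose i * (p (n - i)).eval x := by
  rw [hp.pow_apply hd, eval_smul, smul_eq_mul, Nat.descFactorial_eq_factorial_mul_choose]
  have : (i.factorial : K) ≠ 0 := Nat.cast_ne_zero.2 i.factorial_ne_zero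
  push_cast
  field_simp

end IsBasicSequence

namespace IsGoncarovBasis

variable {d : Module.End K K[X]} {z : ℕ → K} {t : ℕ → K[X]}

lemma coeff_self_ne_zero [CharZero K] (ht : IsGoncarovBasis d z t) (n : ℕ) :
    (t n).coeff n ≠ 0 := by
  have hn : t n ≠ 0 := by
    intro h0
    have h := (ht n).2 n
    rw [h0, map_zero, eval_zero, if_pos rfl] at h
    exact n.factorial_ne_zero (by exact_mod_cast h.symm)
  simpa only [leadingCoeff, (ht n).1] using leadingCoeff_ne_zero.2 hn

lemma eq_sum [CharZero K] (hd : IsDeltaOperator d) (ht : IsGoncarovBasis d z t) {N : ℕ}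
    {f : K[X]} (hf : f.degree < N) :
    f = ∑ i ∈ Finset.range N, (((d ^ i) f).eval (z i) / i.factorial) • t i := by
  induction N generalizing f with
  | zero => simp [degree_eq_bot.1 (by simpa using hf)]
  | succ N ih =>
    set a := f.coeff N / (t N).coeff N
    set g := f - a • t N
    have hg : g.degree < N := by
      refine (degree_lt_iff_coeff_zero _ _).2 fun m hm => ?_
      rcases hm.eq_or_lt with rfl | hm
      · simp [g, a, div_mul_cancel₀ _ (ht.coeff_self_ne_zero _)]
      · have htm : (t N).coeff m = 0 := coeff_eq_zero_of_natDegree_lt (by rw [(ht N).1]; exact hm)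
        simp [g, (degree_lt_iff_coeff_zero _ _).1 hf m hm, htm]
    have hfg : f = g + a • t N := by simp [g]
    have hlow : ∀ i < N, ((d ^ i) g).eval (z i) = ((d ^ i) f).eval (z i) := fun i hi => by
      simp [g, (ht N).2 i, hi.ne]
    have htop : ((d ^ N) f).eval (z N) / N.factorial = a := by
      have : (N.factorial : K) ≠ 0 := Nat.cast_ne_zero.2 N.factorial_ne_zero
      rw [hfg, map_add, map_smul, hd.pow_apply_eq_zero hg, eval_add, eval_smul, (ht N).2 N]
      simp [this]
    conv_lhs => rw [hfg, ih hg]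
    rw [Finset.sum_range_succ, htop]
    congr 1
    exact Finset.sum_congr rfl fun i hi => by rw [hlow i (Finset.mem_range.1 hi)]

end IsGoncarovBasis

end

theorem stmt11 {K : Type*} [Field K] [CharZero K] (d : Module.End K (Polynomial K))
    (hd : IsDeltaOperator d) (z : ℕ → K) (t p : ℕ → Polynomial K)
    (ht : IsGoncarovBasis d z t) (hp : IsBasicSequence d p) :
    (∀ n, p n = ∑ i ∈ Finset.range (n + 1),
        (n.choose i : K) • ((p (n - i)).eval (z i)) • t i) ∧
    (∀ n, t n = p n - ∑ i ∈ Finset.range n,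
        (n.choose i : K) • ((p (n - i)).eval (z i)) • t i) := by
  have expand : ∀ n, p n = ∑ i ∈ Finset.range (n + 1),
      (n.choose i : K) • ((p (n - i)).eval (z i)) • t i := by
    intro n
    have hdeg : (p n).degree < ↑(n + 1 + (p n).natDegree) :=
      degree_le_natDegree.trans_lt (by exact_mod_cast (by omega))
    conv_lhs => rw [ht.eq_sum hd hdeg]
    simp_rw [hp.eval_pow_apply_div_factorial hd, mul_smul]
    refine (Finset.sum_subset (Finset.range_subset_range.2 (by omega)) fun i _ hi => ?_).symm
    rw [Finset.mem_range, not_lt] at hi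
    rw [Nat.choose_eq_zero_of_lt (by omega), Nat.cast_zero, zero_smul]
  refine ⟨expand, fun n => ?_⟩
  rw [eq_sub_iff_add_eq, expand n, Finset.sum_range_succ, Nat.choose_self, Nat.sub_self, hp.1]
  simp [add_comm]
end

section
/- The generalized Gončarov basis (t_n) associated with (𝔡, Z) is a sequence of binomial type (t_n(x+y) = Σ_k C(n,k) t_k(x) t_{n−k}(y)) if and only if Z is an arithmetic grid with initial term 0, i.e., z_i = i·b for some b ∈ K. -/
open Polynomial

/-!
The Gončarov functionals `L_j f = ε_{z_j}(d^j f)` separate polynomials, because `(t_n)` is a basis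
of `K[x]` with `L_j t_n = n! δ_{jn}`. Applying `L_j` to both sides of the binomial identity for
`t_n(x + y)`, and moving the shift `E_y` past `d^j`, shows that `(t_n)` is of binomial type iff
`E_{z_i}(d^i t_n) = n^{(i)} t_{n-i}` for all `i, n` (`n^{(i)}` the falling factorial).
Given this, `d^{i+j} t_{i+j+1}` computed directly and as `d^j (d^i t_{i+j+1})` shows that the
degree-one polynomial `t_1` is invariant under the shift by `z_i + z_j - z_{i+j}`; so `z` is
additive, i.e. arithmetic with initial term `0`. Conversely, if `z_i = i b` then
`L_j ∘ E_{z_i} ∘ d^i = L_{i+j}`, and both sides of the identity have the same functionals.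
-/

section Shift

variable {K : Type*} [Field K]

theorem shiftOp_eq_taylor (a : K) : shiftOp K a = taylor a := by
  refine LinearMap.ext fun p => ?_
  rw [taylor_apply, comp_eq_aeval]
  rfl

theorem IsShiftInvariant.pow_taylor {d : Module.End K K[X]} (hs : IsShiftInvariant d) (i : ℕ)
    (a : K) (f : K[X]) : (d ^ i) (taylor a f) = taylor a ((d ^ i) f) := by
  have hcomm : Commute d (taylor a) := by
    simpa [Commute, SemiconjBy, Module.End.mul_eq_comp, shiftOp_eq_taylor] using hs a
  exact LinearMap.congr_fun (hcomm.pow_left i).eq f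

end Shift

theorem Polynomial.eq_zero_of_taylor_eq_self {R : Type*} [CommRing R] [NoZeroDivisors R]
    {p : R[X]} (hp : p.natDegree = 1) {u : R} (h : taylor u p = p) : u = 0 := by
  have hlead : p.coeff 1 ≠ 0 := by
    rw [← hp]
    exact leadingCoeff_ne_zero.mpr (by rintro rfl; simp at hp)
  have heval : p.eval u = p.eval 0 := by
    rw [← taylor_coeff_zero, h, coeff_zero_eq_eval_zero]
  rw [eq_X_add_C_of_natDegree_le_one hp.le] at heval
  simp only [eval_add, eval_mul, eval_C, eval_X, mul_zero, add_left_inj] at heval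
  exact (mul_eq_zero.mp heval).resolve_left hlead

section Goncarov

variable {K : Type*} [Field K] {d : Module.End K K[X]} {z : ℕ → K} {t : ℕ → K[X]}

noncomputable def goncarovFunctional (d : Module.End K K[X]) (z : ℕ → K) (j : ℕ) :
    K[X] →ₗ[K] K :=
  leval (z j) ∘ₗ d ^ j

theorem goncarovFunctional_apply (j : ℕ) (f : K[X]) :
    goncarovFunctional d z j f = ((d ^ j) f).eval (z j) := rfl

theorem IsShiftInvariant.goncarovFunctional_taylor (hs : IsShiftInvariant d) (j : ℕ) (y : K)
    (f : K[X]) : goncarovFunctional d z j (taylor y f) = (taylor (z j) ((d ^ j) f)).eval y := by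
  rw [goncarovFunctional_apply, hs.pow_taylor, taylor_eval, taylor_eval, add_comm]

namespace IsGoncarovBasis

variable (ht : IsGoncarovBasis d z t)
include ht

theorem goncarovFunctional_apply_self (j n : ℕ) :
    goncarovFunctional d z j (t n) = if j = n then (n.factorial : K) else 0 :=
  (ht n).2 j

theorem goncarovFunctional_binomial_sum (n j : ℕ) (y : K) :
    goncarovFunctional d z j
        (∑ k ∈ Finset.range (n + 1), (n.choose k : K) • ((t (n - k)).eval y • t k)) =
      n.descFactorial j * (t (n - j)).eval y := by
  simp only [map_sum, map_smul, ht.goncarovFunctional_apply_self, smul_eq_mul, mul_ite,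
    mul_zero, Finset.sum_ite_eq, Finset.mem_range]
  split_ifs with hj
  · rw [Nat.descFactorial_eq_factorial_mul_choose]
    push_cast
    ring
  · rw [Nat.descFactorial_eq_zero_iff_lt.mpr (by omega), Nat.cast_zero, zero_mul]

variable [CharZero K]

theorem ne_zero (n : ℕ) : t n ≠ 0 := by
  intro h
  have := ht.goncarovFunctional_apply_self n n
  simp [h, eq_comm, Nat.factorial_ne_zero] at this

noncomputable def basis : Module.Basis ℕ K K[X] :=
  Sequence.basis ⟨t, fun n => by rw [degree_eq_natDegree (ht.ne_zero n), (ht n).1]⟩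
    fun n => isUnit_iff_ne_zero.mpr (leadingCoeff_ne_zero.mpr (ht.ne_zero n))

theorem basis_apply (n : ℕ) : ht.basis n = t n :=
  Sequence.basis_eq_self _ _ _

theorem goncarovFunctional_eq_smul_coord (j : ℕ) :
    goncarovFunctional d z j = (j.factorial : K) • ht.basis.coord j := by
  refine ht.basis.ext fun n => ?_
  rw [basis_apply, ht.goncarovFunctional_apply_self, LinearMap.smul_apply, ← basis_apply ht n,
    Module.Basis.coord_apply, Module.Basis.repr_self, Finsupp.single_apply]
  split_ifs <;> simp_all

theorem ext {f g : K[X]}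
    (h : ∀ j, goncarovFunctional d z j f = goncarovFunctional d z j g) : f = g := by
  refine ht.basis.ext_elem fun j => ?_
  have hj := h j
  simp only [ht.goncarovFunctional_eq_smul_coord, LinearMap.smul_apply, Module.Basis.coord_apply,
    smul_eq_mul] at hj
  exact mul_left_cancel₀ (by exact_mod_cast j.factorial_ne_zero) hj

variable (hs : IsShiftInvariant d)
include hs

theorem binomial_iff_taylor_pow_apply :
    (∀ (n : ℕ) (y : K), (t n).comp (X + C y) =
        ∑ k ∈ Finset.range (n + 1), (n.choose k : K) • ((t (n - k)).eval y • t k)) ↔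
      ∀ i n, taylor (z i) ((d ^ i) (t n)) = (n.descFactorial i : K) • t (n - i) := by
  constructor
  · intro hbin i n
    refine Polynomial.funext fun y => ?_
    rw [← hs.goncarovFunctional_taylor, taylor_apply, hbin, ht.goncarovFunctional_binomial_sum,
      eval_smul, smul_eq_mul]
  · intro h n y
    refine ht.ext fun j => ?_
    rw [← taylor_apply, hs.goncarovFunctional_taylor, h, ht.goncarovFunctional_binomial_sum,
      eval_smul, smul_eq_mul]

theorem map_add_of_taylor_pow_apply
    (h : ∀ i n, taylor (z i) ((d ^ i) (t n)) = (n.descFactorial i : K) • t (n - i))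
    (i j : ℕ) : z (i + j) = z i + z j := by
  set n := i + j + 1
  have hdirect :
      taylor (z (i + j)) ((d ^ (i + j)) (t n)) = (n.descFactorial (i + j) : K) • t 1 := by
    rw [h, show n - (i + j) = 1 by omega]
  have hiterated :
      taylor (z i + z j) ((d ^ (i + j)) (t n)) = (n.descFactorial (i + j) : K) • t 1 := by
    have hc : (n - i).descFactorial j * n.descFactorial i = n.descFactorial (i + j) := by
      simpa using Nat.descFactorial_mul_descFactorial (n := n) (Nat.le_add_right i j)
    calc taylor (z i + z j) ((d ^ (i + j)) (t n))
        = taylor (z j) ((d ^ j) (taylor (z i) ((d ^ i) (t n)))) := by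
          rw [hs.pow_taylor, taylor_taylor, ← Module.End.mul_apply (d ^ j), ← pow_add,
            add_comm (z j), add_comm j]
      _ = ((n.descFactorial i : K) * (n - i).descFactorial j) • t (n - i - j) := by
          rw [h, map_smul, map_smul, h, smul_smul]
      _ = (n.descFactorial (i + j) : K) • t 1 := by
          rw [show n - i - j = 1 by omega, ← hc, Nat.cast_mul, mul_comm]
  have hc : (n.descFactorial (i + j) : K) ≠ 0 :=
    Nat.cast_ne_zero.mpr (Nat.descFactorial_eq_zero_iff_lt.not.mpr (by omega))
  have hperiodic : taylor (z i + z j - z (i + j)) (t 1) = t 1 := by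
    refine smul_right_injective _ hc ?_
    simp only [← map_smul]
    conv_lhs => rw [← hdirect, taylor_taylor, sub_add_cancel, hiterated]
  linear_combination -(eq_zero_of_taylor_eq_self (ht 1).1 hperiodic)

theorem exists_eq_mul_of_taylor_pow_apply
    (h : ∀ i n, taylor (z i) ((d ^ i) (t n)) = (n.descFactorial i : K) • t (n - i)) :
    ∃ b : K, ∀ i : ℕ, z i = (i : K) * b := by
  refine ⟨z 1, fun i => ?_⟩
  simpa using map_nsmul (AddMonoidHom.mk' z (ht.map_add_of_taylor_pow_apply hs h)) i 1

theorem taylor_pow_apply_of_eq_mul {b : K} (hb : ∀ i : ℕ, z i = (i : K) * b) (i n : ℕ) :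
    taylor (z i) ((d ^ i) (t n)) = (n.descFactorial i : K) • t (n - i) := by
  refine ht.ext fun j => ?_
  have hz : z j + z i = z (j + i) := by simp only [hb]; push_cast; ring
  rw [map_smul, ht.goncarovFunctional_apply_self, goncarovFunctional_apply, hs.pow_taylor,
    taylor_eval, ← Module.End.mul_apply, ← pow_add, hz, ← goncarovFunctional_apply,
    ht.goncarovFunctional_apply_self, smul_eq_mul]
  by_cases hj : j + i = n
  · rw [if_pos hj, if_pos (by omega), ← Nat.factorial_mul_descFactorial (by omega : i ≤ n)]
    push_cast
    ring
  · rw [if_neg hj]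
    rcases le_or_gt i n with hin | hin
    · rw [if_neg (by omega), mul_zero]
    · rw [Nat.descFactorial_eq_zero_iff_lt.mpr hin, Nat.cast_zero, zero_mul]

end IsGoncarovBasis

end Goncarov

theorem stmt19 {K : Type*} [Field K] [CharZero K] (d : Module.End K (Polynomial K))
    (hd : IsDeltaOperator d) (z : ℕ → K) (t : ℕ → Polynomial K)
    (ht : IsGoncarovBasis d z t) :
    (∀ (n : ℕ) (y : K), (t n).comp (X + C y) =
        ∑ k ∈ Finset.range (n + 1), (n.choose k : K) • ((t (n - k)).eval y • t k)) ↔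
    ∃ b : K, ∀ i : ℕ, z i = (i : K) * b := by
  rw [ht.binomial_iff_taylor_pow_apply hd.1]
  exact ⟨ht.exists_eq_mul_of_taylor_pow_apply hd.1,
    fun ⟨_, hb⟩ => ht.taylor_pow_apply_of_eq_mul hd.1 hb⟩
end
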